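/- arXiv:0904.1222 — 2 statements merged into one kernel-verified Lean document; each statement's English description precedes it below -/
import Mathlib

section
/- The number of cycles of a uniformly random permutation of {1,...,n} has the same distribution as a sum ∑_{k=1}^n J_k of independent indicator random variables with P(J_k = 1) = 1/k. -/
open MeasureTheory ProbabilityTheory

/-- Number of cycles (including fixed points) of a permutation of `Fin n`. -/
def numCycles {n : ℕ} (σ : Equiv.Perm (Fin n)) : ℕ :=
  σ.cycleType.card + (Finset.univ.filter fun x => σ x = x).card

/-!
After scaling by `n!`, both distributions satisfy the recursion
`c(n+1, m) = n * c(n, m) + c(n, m-1)` of the unsigned Stirling numbers of the first kind.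
A permutation of `Fin (n+1)` is a permutation `e` of `Fin n` together with the image `p` of `0`
(`Equiv.Perm.decomposeFin`): for `p = 0` the point `0` is a new fixed point, otherwise `0` is
inserted into the cycle of `p`, so the number of cycles is `numCycles e + [p = 0]`. On the
probabilistic side, `J (n+1)` is independent of the first `n` summands and equals `1` with
probability `1/(n+1)`, which gives the same recursion.
-/

open Finset

namespace Equiv.Perm

variable {α : Type*} [Fintype α] [DecidableEq α]

theorem card_parts_partition (σ : Perm α) :
    Multiset.card σ.partition.parts =
      Multiset.card σ.cycleType + (Fintype.card α - #σ.support) := by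
  simp [parts_partition]

theorem IsCycle.swap_mul_of_notMem_support {c : Perm α} (hc : c.IsCycle) {a b : α}
    (ha : a ∉ c.support) (hb : b ∈ c.support) :
    (swap a b * c).IsCycle ∧ (swap a b * c).support = insert a c.support := by
  obtain ⟨l, hl⟩ : ∃ l, c.toList b = b :: l := by
    cases h : c.toList b with
    | nil => simp_all
    | cons x l =>
      have := toList_getElem_zero c b hb
      simp_all
  have hform : swap a b * c = List.formPerm (a :: b :: l) := by
    rw [List.formPerm_cons_cons, ← hl, formPerm_toList, hc.cycleOf_eq (mem_support.mp hb)]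
  have hnodup : (a :: b :: l).Nodup := by
    refine List.nodup_cons.mpr ⟨fun h => ha ?_, hl ▸ nodup_toList c b⟩
    rw [← hl, mem_toList_iff] at h
    exact h.1.mem_support_iff.mp hb
  rw [hform]
  refine ⟨List.isCycle_formPerm hnodup (by simp), ?_⟩
  have hsupp : c.support = (c.toList b).toFinset := by
    conv_lhs => rw [← hc.cycleOf_eq (mem_support.mp hb), ← formPerm_toList]
    exact List.support_formPerm_of_nodup _ (nodup_toList c b) (toList_ne_singleton c b)
  rw [List.support_formPerm_of_nodup _ hnodup (by simp), hsupp, hl]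
  simp

theorem card_cycleType_swap_mul_and_support_of_notMem_of_mem {σ : Perm α} {a b : α}
    (ha : a ∉ σ.support) (hb : b ∈ σ.support) :
    Multiset.card (swap a b * σ).cycleType = Multiset.card σ.cycleType ∧
      (swap a b * σ).support = insert a σ.support := by
  set c := σ.cycleOf b
  have hcmem : c ∈ σ.cycleFactorsFinset := cycleOf_mem_cycleFactorsFinset_iff.mpr hb
  have hc : c.IsCycle := isCycle_cycleOf σ (mem_support.mp hb)
  set τ := σ * c⁻¹
  have hτc : Disjoint τ c := disjoint_mul_inv_of_mem_cycleFactorsFinset hcmem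
  have hσ : σ = τ * c := by simp [τ]
  have hbc : b ∈ c.support := by simpa [c] using hb
  have hac : a ∉ c.support := fun h => ha (mem_cycleFactorsFinset_support_le hcmem h)
  have haτ : a ∉ τ.support := fun h => ha (hσ ▸ hτc.support_mul ▸ mem_union_left _ h)
  have hbτ : b ∉ τ.support := disjoint_right.mp (disjoint_iff_disjoint_support.mp hτc) hbc
  obtain ⟨hg, hgsupp⟩ := hc.swap_mul_of_notMem_support hac hbc
  have hτg : Disjoint τ (swap a b * c) := by
    rw [disjoint_iff_disjoint_support, hgsupp, disjoint_insert_right]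
    exact ⟨haτ, disjoint_iff_disjoint_support.mp hτc⟩
  have hswap : swap a b * σ = τ * (swap a b * c) := by
    have : Disjoint (swap a b) τ := by
      rw [disjoint_iff_disjoint_support, support_swap (ne_of_mem_of_not_mem hbc hac).symm]
      simp [haτ, hbτ]
    rw [hσ, ← mul_assoc, this.commute.eq, mul_assoc]
  constructor
  · rw [hswap, hτg.cycleType_mul, hg.cycleType, hσ, hτc.cycleType_mul, hc.cycleType]
    simp
  · rw [hswap, hτg.support_mul, hgsupp, hσ, hτc.support_mul, union_insert]

theorem card_parts_partition_swap_mul {σ : Perm α} {a b : α} (ha : σ a = a) (hab : a ≠ b) :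
    Multiset.card (swap a b * σ).partition.parts + 1 = Multiset.card σ.partition.parts := by
  have hbound := card_le_univ (swap a b * σ).support
  have haσ : a ∉ σ.support := notMem_support.mpr ha
  rw [card_parts_partition, card_parts_partition]
  by_cases hbσ : b ∈ σ.support
  · obtain ⟨hcard, hsupp⟩ := card_cycleType_swap_mul_and_support_of_notMem_of_mem haσ hbσ
    rw [hsupp, card_insert_of_notMem haσ] at hbound ⊢
    omega
  · have hd : Disjoint (swap a b) σ := by
      rw [disjoint_iff_disjoint_support, support_swap hab]
      simp [haσ, hbσ]
    have hcard : Multiset.card (swap a b * σ).cycleType = Multiset.card σ.cycleType + 1 := by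
      simp [hd.cycleType_mul, (isCycle_swap hab).cycleType, add_comm]
    have hsupp : #(swap a b * σ).support = #σ.support + 2 := by
      rw [hd.support_mul, support_swap hab, card_union_of_disjoint (by simp [haσ, hbσ]),
        card_pair hab, add_comm]
    omega

end Equiv.Perm

open Equiv Equiv.Perm

theorem numCycles_eq_card_parts {n : ℕ} (σ : Perm (Fin n)) :
    numCycles σ = Multiset.card σ.partition.parts := by
  rw [card_parts_partition, numCycles, ← card_compl]
  congr 2
  ext x
  simp

theorem decomposeFin_symm_zero_eq_extendDomain {n : ℕ} (e : Perm (Fin n)) :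
    decomposeFin.symm (0, e) = e.extendDomain (finSuccAboveEquiv (0 : Fin (n + 1))) := by
  ext x
  refine Fin.cases ?_ (fun i => ?_) x
  · rw [decomposeFin_symm_apply_zero, extendDomain_apply_not_subtype _ _ (by simp)]
  · have : i.succ = (finSuccAboveEquiv (0 : Fin (n + 1)) i : Fin (n + 1)) := by
      simp [finSuccAboveEquiv_apply]
    rw [decomposeFin_symm_apply_succ, this, extendDomain_apply_image]
    simp [finSuccAboveEquiv_apply]

theorem numCycles_decomposeFin_symm_zero {n : ℕ} (e : Perm (Fin n)) :
    numCycles (decomposeFin.symm (0, e)) = numCycles e + 1 := by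
  have := card_le_univ e.support
  rw [decomposeFin_symm_zero_eq_extendDomain, numCycles_eq_card_parts, numCycles_eq_card_parts,
    card_parts_partition, card_parts_partition, cycleType_extendDomain, card_support_extend_domain]
  simp only [Fintype.card_fin] at *
  omega

theorem decomposeFin_symm_eq_swap_mul {n : ℕ} (p : Fin (n + 1)) (e : Perm (Fin n)) :
    decomposeFin.symm (p, e) = swap 0 p * decomposeFin.symm (0, e) := by
  ext x
  refine Fin.cases ?_ (fun i => ?_) x <;> simp [decomposeFin_symm_apply_succ]

theorem numCycles_decomposeFin_symm {n : ℕ} (p : Fin (n + 1)) (e : Perm (Fin n)) :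
    numCycles (decomposeFin.symm (p, e)) = numCycles e + if p = 0 then 1 else 0 := by
  split_ifs with hp
  · rw [hp, numCycles_decomposeFin_symm_zero]
  · have := card_parts_partition_swap_mul (decomposeFin_symm_apply_zero 0 e) (Ne.symm hp)
    rw [← decomposeFin_symm_eq_swap_mul, ← numCycles_eq_card_parts, ← numCycles_eq_card_parts,
      numCycles_decomposeFin_symm_zero] at this
    omega

theorem card_numCycles_succ (n m : ℕ) :
    #{σ : Perm (Fin (n + 1)) | numCycles σ = m} =
      #{e : Perm (Fin n) | numCycles e + 1 = m} + n * #{e : Perm (Fin n) | numCycles e = m} := by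
  simp only [card_filter]
  rw [← decomposeFin.symm.sum_comp, Fintype.sum_prod_type, Fin.sum_univ_succ]
  simp [numCycles_decomposeFin_symm, Fin.succ_ne_zero]

theorem card_numCycles_eq_stirlingFirst (n m : ℕ) :
    #{σ : Perm (Fin n) | numCycles σ = m} = Nat.stirlingFirst n m := by
  induction n generalizing m with
  | zero => cases m <;> simp [univ_unique, filter_singleton, numCycles]
  | succ n ih =>
    rw [card_numCycles_succ, ih]
    cases m with
    | zero => cases n <;> simp
    | succ k => simp [ih, Nat.stirlingFirst_succ_succ, add_comm]

theorem measure_add_eq_of_indepFun_of_zero_or_one {Ω : Type*} [MeasurableSpace Ω]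
    {μ : Measure Ω} {X Y : Ω → ℕ} (hX : Measurable X)
    (hY : Measurable Y) (hXY : IndepFun X Y μ) (hY01 : ∀ ω, Y ω = 0 ∨ Y ω = 1) (m : ℕ) :
    μ {ω | X ω + Y ω = m} =
      μ {ω | X ω = m} * μ {ω | Y ω = 0} + μ {ω | X ω + 1 = m} * μ {ω | Y ω = 1} := by
  have hsplit : {ω | X ω + Y ω = m} =
      (X ⁻¹' {m} ∩ Y ⁻¹' {0}) ∪ (X ⁻¹' {k | k + 1 = m} ∩ Y ⁻¹' {1}) := by
    ext ω
    rcases hY01 ω with h | h <;> simp [h]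
  have hdisj : Disjoint (X ⁻¹' {m} ∩ Y ⁻¹' {0}) (X ⁻¹' {k | k + 1 = m} ∩ Y ⁻¹' {1}) :=
    Set.disjoint_left.mpr fun ω h₀ h₁ => by simp_all
  rw [hsplit, measure_union hdisj ((hX .of_discrete).inter (hY .of_discrete)),
    hXY.measure_inter_preimage_eq_mul _ _ .of_discrete .of_discrete,
    hXY.measure_inter_preimage_eq_mul _ _ .of_discrete .of_discrete]
  rfl

open scoped ENNReal Nat

theorem ENNReal.div_factorial_mul_add_div_factorial_mul (a b n : ℕ) :
    (a / n ! : ℝ≥0∞) * (n / (n + 1)) + b / n ! * (1 / (n + 1)) = (n * a + b : ℕ) / (n + 1)! := by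
  rw [Nat.factorial_succ]
  simp only [ENNReal.div_eq_inv_mul]
  push_cast
  rw [ENNReal.mul_inv (by simp) (by simp)]
  ring

theorem measure_sum_eq_stirlingFirst_div_factorial {Ω : Type*} [MeasurableSpace Ω]
    (μ : Measure Ω) [IsProbabilityMeasure μ] (J : ℕ → Ω → ℕ) (hmeas : ∀ k, Measurable (J k))
    (hind : iIndepFun J μ) (hval : ∀ k ω, J k ω = 0 ∨ J k ω = 1)
    (hp : ∀ k, 1 ≤ k → μ {ω | J k ω = 1} = 1 / (k : ℝ≥0∞)) (n m : ℕ) :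
    μ {ω | ∑ k ∈ Icc 1 n, J k ω = m} = Nat.stirlingFirst n m / n ! := by
  induction n generalizing m with
  | zero => cases m <;> simp
  | succ n ih =>
    have hS : Measurable fun ω => ∑ k ∈ Icc 1 n, J k ω :=
      Finset.measurable_sum _ fun k _ => hmeas k
    have hSJ : IndepFun (fun ω => ∑ k ∈ Icc 1 n, J k ω) (J (n + 1)) μ := by
      simpa [Finset.sum_fn] using hind.indepFun_finsetSum_of_notMem hmeas (i := n + 1) (by simp)
    have h1 : μ {ω | J (n + 1) ω = 1} = 1 / (n + 1) := by simpa using hp (n + 1) (by omega)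
    have h0 : μ {ω | J (n + 1) ω = 0} = n / (n + 1) := by
      have : {ω | J (n + 1) ω = 0} = {ω | J (n + 1) ω = 1}ᶜ := by
        ext ω
        rcases hval (n + 1) ω with h | h <;> simp [h]
      have hmeas1 : MeasurableSet {ω | J (n + 1) ω = 1} :=
        hmeas _ (measurableSet_singleton 1)
      rw [this, prob_compl_eq_one_sub hmeas1, h1]
      refine (ENNReal.eq_sub_of_add_eq (by simp) ?_).symm
      rw [ENNReal.div_add_div_same, ENNReal.div_self (by simp) (by simp)]
    simp only [sum_Icc_succ_top (Nat.le_add_left 1 n)]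
    rw [measure_add_eq_of_indepFun_of_zero_or_one hS (hmeas _) hSJ (hval _), h0, h1, ih]
    rcases m with _ | k
    · cases n <;> simp
    · simp only [add_left_inj, ih, Nat.stirlingFirst_succ_succ]
      exact ENNReal.div_factorial_mul_add_div_factorial_mul _ _ _

/-- The number of cycles of a uniformly random permutation of `{1,…,n}` is distributed
as a sum of independent indicators `J_1,…,J_n` with `P(J_k = 1) = 1/k`. -/
theorem stmt_1 {Ω : Type*} [MeasurableSpace Ω] (μ : Measure Ω) [IsProbabilityMeasure μ]
    (n : ℕ) (J : ℕ → Ω → ℕ)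
    (hmeas : ∀ k, Measurable (J k))
    (hind : iIndepFun J μ)
    (hval : ∀ k ω, J k ω = 0 ∨ J k ω = 1)
    (hp : ∀ k, 1 ≤ k → μ {ω | J k ω = 1} = 1 / (k : ENNReal)) :
    ∀ m : ℕ,
      μ {ω | ∑ k ∈ Finset.Icc 1 n, J k ω = m} =
        ((Finset.univ.filter fun σ : Equiv.Perm (Fin n) => numCycles σ = m).card : ENNReal) /
          (n.factorial : ENNReal) := by
  intro m
  rw [card_numCycles_eq_stirlingFirst]
  exact measure_sum_eq_stirlingFirst_div_factorial μ J hmeas hind hval hp n m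
end

section
/- For 0 ≤ r ≤ n−1, the recursively defined numbers a_{n-1,n-r-1} admit the explicit formula a_{n-1,n-r-1} = (n−r−1)! · ∑_{1 ≤ j_1 < ... < j_r ≤ n−1} j_1 (j_2 − 1) ··· (j_r − (r−1)). -/
/-- The triangular array `a_{k,m}` with `a_{0,0} = 1` and
`a_{k,m} = m a_{k-1,m-1} + (m+1) a_{k-1,m}`. -/
def aCoef : ℕ → ℕ → ℕ
  | 0, 0 => 1
  | 0, _ + 1 => 0
  | k + 1, 0 => aCoef k 0
  | k + 1, m + 1 => (m + 1) * aCoef k m + (m + 2) * aCoef k (m + 1)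

/-!
Write `S(n, r)` for the sum over `r`-subsets of `{1, …, n}`. Splitting the subsets according to
whether they contain their largest possible element `n + 1` gives
`S(n+1, t+1) = S(n, t+1) + (n+1-t) S(n, t)`, because `n + 1` then sits in position `t + 1` of the
sorted list and contributes the factor `n + 1 - t`. Multiplied by `(n-t)!`, this is exactly the
recurrence of `aCoef` at `(n + 1, n - t)`, so induction on `n` identifies `aCoef n (n - r)` with
`(n - r)! S(n, r)`.
-/

open Finset

theorem aCoef_eq_zero_of_lt {k m : ℕ} (h : k < m) : aCoef k m = 0 := by
  induction k generalizing m with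
  | zero => obtain ⟨m, rfl⟩ := Nat.exists_eq_succ_of_ne_zero (by omega : m ≠ 0); rfl
  | succ k ih =>
    obtain ⟨m, rfl⟩ := Nat.exists_eq_succ_of_ne_zero (by omega : m ≠ 0)
    simp only [aCoef, ih (by omega : k < m), ih (by omega : k < m + 1), mul_zero, add_zero]

theorem Finset.sort_insert_of_forall_lt {α : Type*} [LinearOrder α] {s : Finset α} {b : α}
    (h : ∀ a ∈ s, a < b) :
    (insert b s).sort (· ≤ ·) = s.sort (· ≤ ·) ++ [b] := by
  have hb : b ∉ s := fun hb => lt_irrefl b (h b hb)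
  refine List.Perm.eq_of_pairwise' (pairwise_sort _ _) ?_ ?_
  · refine List.pairwise_append.2 ⟨pairwise_sort _ _, List.pairwise_singleton _ b, ?_⟩
    rintro x hx y hy
    rw [List.mem_singleton.1 hy]
    exact (h x ((mem_sort _).1 hx)).le
  · rw [← Multiset.coe_eq_coe, ← Multiset.coe_add, sort_eq, sort_eq, insert_val,
      Multiset.ndinsert_of_notMem hb, Multiset.coe_singleton, add_comm, Multiset.singleton_add]

theorem Finset.sum_powersetCard_succ_insert {α β : Type*} [DecidableEq α] [AddCommMonoid β]
    {s : Finset α} {x : α} (hx : x ∉ s) (k : ℕ) (f : Finset α → β) :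
    ∑ t ∈ (insert x s).powersetCard (k + 1), f t =
      ∑ t ∈ s.powersetCard (k + 1), f t + ∑ t ∈ s.powersetCard k, f (insert x t) := by
  have hdisj : Disjoint (s.powersetCard (k + 1)) ((s.powersetCard k).image (insert x)) := by
    refine disjoint_left.2 fun t ht ht' => ?_
    obtain ⟨u, -, rfl⟩ := mem_image.1 ht'
    exact hx ((mem_powersetCard.1 ht).1 (mem_insert_self _ _))
  have hinj : Set.InjOn (insert x) (s.powersetCard k : Set (Finset α)) := fun a ha b hb hab => by
    rw [mem_coe, mem_powersetCard] at ha hb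
    rw [← erase_insert fun h => hx (ha.1 h), ← erase_insert fun h => hx (hb.1 h), hab]
  rw [powersetCard_succ_insert hx, sum_union hdisj, sum_image hinj]

/-- `j₁ (j₂ - 1) ⋯ (j_r - (r - 1))` for `s = {j₁ < ⋯ < j_r}`. -/
def shiftedProd (s : Finset ℕ) : ℕ :=
  ((s.sort (· ≤ ·)).zipIdx.map fun p => p.1 - p.2).prod

def shiftedProdSum (n r : ℕ) : ℕ :=
  ∑ s ∈ (Icc 1 n).powersetCard r, shiftedProd s

theorem shiftedProd_insert_of_forall_lt {s : Finset ℕ} {b : ℕ} (h : ∀ a ∈ s, a < b) :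
    shiftedProd (insert b s) = shiftedProd s * (b - #s) := by
  simp [shiftedProd, sort_insert_of_forall_lt h, List.zipIdx_append]

theorem shiftedProdSum_zero_right (n : ℕ) : shiftedProdSum n 0 = 1 := by
  simp [shiftedProdSum, shiftedProd]

theorem shiftedProdSum_eq_zero_of_lt {n r : ℕ} (h : n < r) : shiftedProdSum n r = 0 := by
  rw [shiftedProdSum, powersetCard_eq_empty.2 (by simpa using h), sum_empty]

theorem shiftedProdSum_succ_succ (n t : ℕ) :
    shiftedProdSum (n + 1) (t + 1) =
      shiftedProdSum n (t + 1) + (n + 1 - t) * shiftedProdSum n t := by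
  rw [shiftedProdSum, ← insert_Icc_right_eq_Icc_add_one (by omega), sum_powersetCard_succ_insert (by simp), shiftedProdSum,
    shiftedProdSum, mul_sum]
  congr 1
  refine sum_congr rfl fun s hs => ?_
  obtain ⟨hsub, hcard⟩ := mem_powersetCard.1 hs
  rw [shiftedProd_insert_of_forall_lt fun a ha => by have := mem_Icc.1 (hsub ha); omega, hcard,
    mul_comm]

theorem aCoef_sub_eq_factorial_mul (n r : ℕ) (hr : r ≤ n) :
    aCoef n (n - r) = (n - r).factorial * shiftedProdSum n r := by
  induction n generalizing r with
  | zero =>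
    obtain rfl : r = 0 := by omega
    simp [aCoef, shiftedProdSum_zero_right]
  | succ n ih =>
    obtain _ | t := r
    · have hB := ih 0 (Nat.zero_le n)
      simp only [Nat.sub_zero, shiftedProdSum_zero_right, mul_one] at hB ⊢
      rw [aCoef, hB, aCoef_eq_zero_of_lt (Nat.lt_succ_self n), Nat.factorial_succ]
      ring
    rw [shiftedProdSum_succ_succ]
    obtain rfl | htn := eq_or_lt_of_le (Nat.le_of_succ_le_succ hr)
    · have hB := ih t le_rfl
      rw [Nat.sub_self] at hB
      simp [aCoef, hB, shiftedProdSum_eq_zero_of_lt (Nat.lt_succ_self t)]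
    obtain ⟨u, hu⟩ : ∃ u, n - t = u + 1 := ⟨n - t - 1, by omega⟩
    have hA := ih (t + 1) htn
    have hB := ih t htn.le
    rw [(by omega : n - (t + 1) = u)] at hA
    rw [hu] at hB
    rw [(by omega : n + 1 - (t + 1) = u + 1), (by omega : n + 1 - t = u + 2), aCoef, hA, hB,
      Nat.factorial_succ]
    ring

theorem stmt_6_general (n r : ℕ) (hr : r ≤ n - 1) :
    aCoef (n - 1) (n - r - 1) =
      (n - r - 1).factorial *
        ∑ s ∈ (Finset.Icc 1 (n - 1)).powersetCard r,
          ((s.sort (· ≤ ·)).zipIdx.map fun p => p.1 - p.2).prod := by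
  rw [Nat.sub_right_comm]
  exact aCoef_sub_eq_factorial_mul (n - 1) r hr

/-- For `0 ≤ r ≤ n-1`:
`a_{n-1,n-r-1} = (n-r-1)! ∑_{1 ≤ j_1 < ⋯ < j_r ≤ n-1} j_1 (j_2-1) ⋯ (j_r-(r-1))`,
where the sum is over `r`-element subsets of `{1,…,n-1}` listed in increasing order. -/
theorem stmt_6 (n r : ℕ) (hn : 1 ≤ n) (hr : r ≤ n - 1) :
    aCoef (n - 1) (n - r - 1) =
      (n - r - 1).factorial *
        ∑ s ∈ (Finset.Icc 1 (n - 1)).powersetCard r,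
          ((s.sort (· ≤ ·)).zipIdx.map fun p => p.1 - p.2).prod :=
  stmt_6_general n r hr
end
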